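/- Let P_ξ be the Pareto operator that, for index i and threshold c ∈ S(ξ), returns the set of vectors Γ(u) = (inf_w L^1(x_ξ^w(u),u), ..., inf_w L^m(x_ξ^w(u),u)) over all controls u optimal for the maximin problem maximizing inf_w L^i subject to the constraints parametrized by c. Then under the standing assumptions, P_ξ(i,c) is nonempty and P_ξ(i,c) ⊆ S(ξ) for every i ∈ {1,...,m} and c ∈ S(ξ). -/

import Mathlib

/-- Trajectory of the discrete-time control system `x_{k+1} = F_k(x_k, u_k, ω_k)`, `x_0 = ξ`. -/
def traj {X U W : Type*} (F : ℕ → X → U → W → X) (ξ : X) (u : ℕ → U) (w : ℕ → W) : ℕ → X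
  | 0 => ξ
  | k + 1 => F k (traj F ξ u w k) (u k) (w k)

/-- `u` is admissible for `(ξ, c)`: for every scenario, the mixed and end-point
constraints hold (componentwise, thresholds `c`). -/
def Adm {X U W : Type*} {m : ℕ} (N : ℕ) (F : ℕ → X → U → W → X) (Ω : ℕ → Set W)
    (g : ℕ → X → U → Fin m → ℝ) (θ : X → Fin m → ℝ) (ξ : X) (c : Fin m → ℝ)
    (u : ℕ → U) : Prop :=
  ∀ w : ℕ → W, (∀ k, w k ∈ Ω k) →
    (∀ k ≤ N, c ≤ g k (traj F ξ u w k) (u k)) ∧ c ≤ θ (traj F ξ u w (N + 1))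

/-- The set of robust sustainable thresholds `S(ξ)`. -/
def SST {X U W : Type*} {m : ℕ} (N : ℕ) (F : ℕ → X → U → W → X) (Ω : ℕ → Set W)
    (g : ℕ → X → U → Fin m → ℝ) (θ : X → Fin m → ℝ) (ξ : X) : Set (Fin m → ℝ) :=
  {c | ∃ u : ℕ → U, Adm N F Ω g θ ξ c u}


/-- The threshold map `Γ(u)_i = inf_w min{ min_{k≤N} g^k_i(x_k,u_k), θ_i(x_{N+1}) }`. -/
noncomputable def Gam {X U W : Type*} {m : ℕ} (N : ℕ) (F : ℕ → X → U → W → X)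
    (Ω : ℕ → Set W) (g : ℕ → X → U → Fin m → ℝ) (θ : X → Fin m → ℝ) (ξ : X)
    (u : ℕ → U) : Fin m → ℝ :=
  fun i => ⨅ w : {w : ℕ → W // ∀ k, w k ∈ Ω k},
    min ((Finset.Icc 0 N).inf' (Finset.nonempty_Icc.2 (Nat.zero_le N))
          fun k => g k (traj F ξ u w.1 k) (u k) i)
        (θ (traj F ξ u w.1 (N + 1)) i)

/-- Controls that are optimal for the maximin problem `v_ξ^i(c)`:
admissible for threshold `c` and maximizing `inf_w L^i = Γ(·)_i` among admissible controls. -/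
def OptCtrl {X U W : Type*} {m : ℕ} (N : ℕ) (F : ℕ → X → U → W → X) (Ω : ℕ → Set W)
    (g : ℕ → X → U → Fin m → ℝ) (θ : X → Fin m → ℝ) (ξ : X)
    (i : Fin m) (c : Fin m → ℝ) (u : ℕ → U) : Prop :=
  Adm N F Ω g θ ξ c u ∧
    ∀ u' : ℕ → U, Adm N F Ω g θ ξ c u' →
      Gam N F Ω g θ ξ u' i ≤ Gam N F Ω g θ ξ u i

/-- The Pareto operator `P_ξ(i,c)`: images under `Γ` of controls optimal for `v_ξ^i(c)`. -/
noncomputable def ParetoOp {X U W : Type*} {m : ℕ} (N : ℕ) (F : ℕ → X → U → W → X)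
    (Ω : ℕ → Set W) (g : ℕ → X → U → Fin m → ℝ) (θ : X → Fin m → ℝ) (ξ : X)
    (i : Fin m) (c : Fin m → ℝ) : Set (Fin m → ℝ) :=
  Gam N F Ω g θ ξ '' {u | OptCtrl N F Ω g θ ξ i c u}


/-
The admissible controls for a threshold `c` form a closed subset of the compact space `ℕ → U`,
because each constraint `c ≤ L^j(x^w(u), u)` is a superlevel set of a function that is upper
semicontinuous in `u` (the trajectory depends continuously on `u`). The map `u ↦ Γ(u)_i`, an
infimum of such functions that is bounded below, is upper semicontinuous, so it attains its
maximum on that nonempty compact set; this gives an optimal control. Finally every `Γ(u)` is a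
sustainable threshold, witnessed by `u` itself, since `Γ(u)_j` bounds each `L^j(x^w(u), u)` from
below.
-/

theorem UpperSemicontinuous.finset_inf' {ι α β : Type*} [TopologicalSpace α] [LinearOrder β]
    {s : Finset ι} (hs : s.Nonempty) {f : ι → α → β} (hf : ∀ k ∈ s, UpperSemicontinuous (f k)) :
    UpperSemicontinuous fun x => s.inf' hs fun k => f k x := by
  simp only [← Finset.inf'_apply]
  exact Finset.inf'_induction hs f (fun _ h₁ _ h₂ => h₁.inf h₂) hf

section ControlSystem

variable {X U W : Type*} {m N : ℕ} (F : ℕ → X → U → W → X) (Ω : ℕ → Set W)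
  (g : ℕ → X → U → Fin m → ℝ) (θ : X → Fin m → ℝ) (ξ : X)

theorem continuous_traj [TopologicalSpace X] [TopologicalSpace U] {w : ℕ → W}
    (hF : ∀ k, Continuous fun p : X × U => F k p.1 p.2 (w k)) (k : ℕ) :
    Continuous fun u : ℕ → U => traj F ξ u w k := by
  induction k with
  | zero => exact continuous_const
  | succ k ih => exact (hF k).comp (ih.prodMk (continuous_apply k))

/-- The paper's `L^j(x^w(u), u)`. -/
noncomputable def payoff (N : ℕ) (j : Fin m) (w : ℕ → W) (u : ℕ → U) : ℝ :=
  min ((Finset.Icc 0 N).inf' (Finset.nonempty_Icc.2 (Nat.zero_le N))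
        fun k => g k (traj F ξ u w k) (u k) j)
      (θ (traj F ξ u w (N + 1)) j)

theorem Gam_apply (u : ℕ → U) (j : Fin m) :
    Gam N F Ω g θ ξ u j = ⨅ w : {w : ℕ → W // ∀ k, w k ∈ Ω k}, payoff F g θ ξ N j w.1 u :=
  rfl

theorem adm_iff_le_payoff (c : Fin m → ℝ) (u : ℕ → U) :
    Adm N F Ω g θ ξ c u ↔ ∀ w : ℕ → W, (∀ k, w k ∈ Ω k) → ∀ j, c j ≤ payoff F g θ ξ N j w u := by
  simp only [Adm, payoff, Pi.le_def, le_min_iff, Finset.le_inf'_iff, Finset.mem_Icc,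
    Nat.zero_le, true_and]
  exact forall₂_congr fun w _ => by aesop

theorem bddBelow_range_payoff
    (hg_bdd : ∀ k j, BddBelow (Set.range fun p : X × U => g k p.1 p.2 j))
    (hθ_bdd : ∀ j, BddBelow (Set.range fun x => θ x j)) (j : Fin m) (u : ℕ → U) :
    BddBelow (Set.range fun w : {w : ℕ → W // ∀ k, w k ∈ Ω k} => payoff F g θ ξ N j w.1 u) := by
  choose bg hbg using hg_bdd
  obtain ⟨bθ, hbθ⟩ := hθ_bdd j
  refine ⟨min ((Finset.Icc 0 N).inf' (Finset.nonempty_Icc.2 (Nat.zero_le N)) fun k => bg k j) bθ,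
    ?_⟩
  rintro _ ⟨w, rfl⟩
  refine min_le_min (Finset.le_inf' _ _ fun k hk => ?_) (hbθ (Set.mem_range_self _))
  exact (Finset.inf'_le _ hk).trans (hbg k j (Set.mem_range_self (traj F ξ u w.1 k, u k)))

theorem adm_Gam
    (hg_bdd : ∀ k j, BddBelow (Set.range fun p : X × U => g k p.1 p.2 j))
    (hθ_bdd : ∀ j, BddBelow (Set.range fun x => θ x j)) (u : ℕ → U) :
    Adm N F Ω g θ ξ (Gam N F Ω g θ ξ u) u :=
  (adm_iff_le_payoff F Ω g θ ξ _ u).2 fun w hw j =>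
    ciInf_le (bddBelow_range_payoff F Ω g θ ξ hg_bdd hθ_bdd j u) ⟨w, hw⟩

variable [TopologicalSpace X] [TopologicalSpace U]

theorem upperSemicontinuous_payoff {w : ℕ → W}
    (hF : ∀ k, Continuous fun p : X × U => F k p.1 p.2 (w k))
    (hg_usc : ∀ k j, UpperSemicontinuous fun p : X × U => g k p.1 p.2 j)
    (hθ_usc : ∀ j, UpperSemicontinuous fun x => θ x j) (j : Fin m) :
    UpperSemicontinuous (payoff F g θ ξ N j w) := by
  refine UpperSemicontinuous.inf (UpperSemicontinuous.finset_inf' _ fun k _ => ?_) ?_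
  · exact (hg_usc k j).comp ((continuous_traj F ξ hF k).prodMk (continuous_apply k))
  · exact (hθ_usc j).comp (continuous_traj F ξ hF (N + 1))

theorem isClosed_setOf_adm (hF : ∀ k, ∀ ω ∈ Ω k, Continuous fun p : X × U => F k p.1 p.2 ω)
    (hg_usc : ∀ k j, UpperSemicontinuous fun p : X × U => g k p.1 p.2 j)
    (hθ_usc : ∀ j, UpperSemicontinuous fun x => θ x j) (c : Fin m → ℝ) :
    IsClosed {u : ℕ → U | Adm N F Ω g θ ξ c u} := by
  simp only [adm_iff_le_payoff, Set.ofPred_forall]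
  exact isClosed_iInter fun w => isClosed_iInter fun hw => isClosed_iInter fun j =>
    (upperSemicontinuous_payoff F g θ ξ (fun k => hF k (w k) (hw k)) hg_usc hθ_usc j)
      |>.isClosed_preimage (c j)

theorem exists_optCtrl [CompactSpace U]
    (hF : ∀ k, ∀ ω ∈ Ω k, Continuous fun p : X × U => F k p.1 p.2 ω)
    (hg_usc : ∀ k j, UpperSemicontinuous fun p : X × U => g k p.1 p.2 j)
    (hg_bdd : ∀ k j, BddBelow (Set.range fun p : X × U => g k p.1 p.2 j))
    (hθ_usc : ∀ j, UpperSemicontinuous fun x => θ x j)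
    (hθ_bdd : ∀ j, BddBelow (Set.range fun x => θ x j))
    (i : Fin m) {c : Fin m → ℝ} (hc : c ∈ SST N F Ω g θ ξ) :
    ∃ u, OptCtrl N F Ω g θ ξ i c u := by
  have hGam_usc : UpperSemicontinuous fun u : ℕ → U => Gam N F Ω g θ ξ u i :=
    upperSemicontinuous_ciInf (bddBelow_range_payoff F Ω g θ ξ hg_bdd hθ_bdd i) fun w =>
      upperSemicontinuous_payoff F g θ ξ (fun k => hF k (w.1 k) (w.2 k)) hg_usc hθ_usc i
  obtain ⟨u, hu, hmax⟩ := (hGam_usc.upperSemicontinuousOn _).exists_isMaxOn hc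
    (isClosed_setOf_adm F Ω g θ ξ hF hg_usc hθ_usc c).isCompact
  exact ⟨u, hu, fun u' hu' => hmax hu'⟩

end ControlSystem

theorem stmt5_general {X U W : Type*} [NormedAddCommGroup X]
    [MetricSpace U] [CompactSpace U]
    {m N : ℕ} (F : ℕ → X → U → W → X) (Ω : ℕ → Set W)
    (g : ℕ → X → U → Fin m → ℝ) (θ : X → Fin m → ℝ)
    (hF : ∀ k, ∀ ω ∈ Ω k, Continuous fun p : X × U => F k p.1 p.2 ω)
    (hg_usc : ∀ k i, UpperSemicontinuous fun p : X × U => g k p.1 p.2 i)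
    (hg_bdd : ∀ k i, BddBelow (Set.range fun p : X × U => g k p.1 p.2 i))
    (hθ_usc : ∀ i, UpperSemicontinuous fun x => θ x i)
    (hθ_bdd : ∀ i, BddBelow (Set.range fun x => θ x i))
    (ξ : X) (i : Fin m) (c : Fin m → ℝ) (hc : c ∈ SST N F Ω g θ ξ) :
    (ParetoOp N F Ω g θ ξ i c).Nonempty ∧
    ParetoOp N F Ω g θ ξ i c ⊆ SST N F Ω g θ ξ := by
  refine ⟨?_, ?_⟩
  · obtain ⟨u, hu⟩ := exists_optCtrl F Ω g θ ξ hF hg_usc hg_bdd hθ_usc hθ_bdd i hc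
    exact ⟨_, u, hu, rfl⟩
  · rintro _ ⟨u, -, rfl⟩
    exact ⟨u, adm_Gam F Ω g θ ξ hg_bdd hθ_bdd u⟩

/-- Under the standing assumptions, the Pareto operator has nonempty values
and its images are robust sustainable thresholds. -/
theorem stmt5 {X U W : Type*} [NormedAddCommGroup X] [NormedSpace ℝ X] [FiniteDimensional ℝ X]
    [MetricSpace U] [CompactSpace U] [Nonempty U]
    {m N : ℕ} (F : ℕ → X → U → W → X) (Ω : ℕ → Set W) (hΩ : ∀ k, (Ω k).Nonempty)
    (g : ℕ → X → U → Fin m → ℝ) (θ : X → Fin m → ℝ)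
    (hF : ∀ k, ∀ ω ∈ Ω k, Continuous fun p : X × U => F k p.1 p.2 ω)
    (hg_usc : ∀ k i, UpperSemicontinuous fun p : X × U => g k p.1 p.2 i)
    (hg_bdd : ∀ k i, BddBelow (Set.range fun p : X × U => g k p.1 p.2 i))
    (hθ_usc : ∀ i, UpperSemicontinuous fun x => θ x i)
    (hθ_bdd : ∀ i, BddBelow (Set.range fun x => θ x i))
    (ξ : X) (i : Fin m) (c : Fin m → ℝ) (hc : c ∈ SST N F Ω g θ ξ) :
    (ParetoOp N F Ω g θ ξ i c).Nonempty ∧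
    ParetoOp N F Ω g θ ξ i c ⊆ SST N F Ω g θ ξ :=
  stmt5_general F Ω g θ hF hg_usc hg_bdd hθ_usc hθ_bdd ξ i c hc
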